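/- (Observability of roll, pitch, and velocity; unobservability of yaw and position under body-velocity correction.) Fix g ∈ ℝ³, let A be the 9×9 block matrix [[0, 0, 0], [(g)ₓ, 0, 0], [0, I₃, 0]], and let H = [0_{3×3}, I₃, 0_{3×3}] be the 3×9 measurement Jacobian of the velocity correction model. Then for ξ = (ξ^ω, ξ^v, ξ^p) ∈ ℝ⁹, H · exp(tA) · ξ = 0 for all t ∈ ℝ if and only if ξ^v = 0 and g × ξ^ω = 0. In particular, the unobservable directions consist exactly of attitude errors ξ^ω parallel to the gravity vector g (the yaw angle) together with arbitrary position errors ξ^p, while the velocity and the components of attitude error orthogonal to g (roll and pitch) are observable. -/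

import Mathlib

open Matrix NormedSpace

/-- The skew-symmetric matrix `(g)ₓ` associated with `g ∈ ℝ³`. -/
def skew3 (g : Fin 3 → ℝ) : Matrix (Fin 3) (Fin 3) ℝ :=
  !![0, -g 2, g 1; g 2, 0, -g 0; -g 1, g 0, 0]

/-- The `9 × 9` block matrix `A = [[0,0,0],[(g)ₓ,0,0],[0,I₃,0]]` (blocks
ordered as attitude, velocity, position). -/
def Amat (g : Fin 3 → ℝ) : Matrix (Fin 3 ⊕ (Fin 3 ⊕ Fin 3)) (Fin 3 ⊕ (Fin 3 ⊕ Fin 3)) ℝ :=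
  Matrix.of fun i j =>
    match i, j with
    | Sum.inr (Sum.inl i), Sum.inl j => skew3 g i j
    | Sum.inr (Sum.inr i), Sum.inr (Sum.inl j) => if i = j then 1 else 0
    | _, _ => 0

/-- The `3 × 9` measurement Jacobian `H = [0₃ₓ₃ I₃ 0₃ₓ₃]` of the
body-velocity correction model. -/
def Hmat : Matrix (Fin 3) (Fin 3 ⊕ (Fin 3 ⊕ Fin 3)) ℝ :=
  Matrix.of fun i j =>
    match j with
    | Sum.inr (Sum.inl j) => if i = j then 1 else 0
    | _ => 0

lemma Acube (g : Fin 3 → ℝ) : Amat g * Amat g * Amat g = 0 := by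
  ext i j
  rcases i with i | i | i <;> rcases j with j | j | j <;>
    simp [Matrix.mul_apply, Fintype.sum_sum_type, Amat, Fin.sum_univ_three]

lemma exp_Amat (g : Fin 3 → ℝ) (t : ℝ) :
    NormedSpace.exp (t • Amat g) = 1 + t • Amat g + (t ^ 2 / 2) • (Amat g * Amat g) := by
  have h3 : (t • Amat g) ^ 3 = 0 := by
    rw [smul_pow, show Amat g ^ 3 = Amat g * Amat g * Amat g by rw [pow_succ, pow_succ, pow_one], Acube, smul_zero]
  rw [exp_eq_tsum (𝕂 := ℝ)]
  simp only []
  rw [tsum_eq_sum (s := Finset.range 3) (by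
    intro n hn
    rw [Finset.mem_range, not_lt] at hn
    obtain ⟨m, rfl⟩ := Nat.exists_eq_add_of_le hn
    rw [add_comm, pow_add, h3, mul_zero, smul_zero])]
  rw [Finset.sum_range_succ, Finset.sum_range_succ, Finset.sum_range_succ,
    Finset.sum_range_zero]
  simp [pow_two, smul_smul]
  norm_num
  congr 1
  ring

lemma Hval (g ξω ξv ξp : Fin 3 → ℝ) (t : ℝ) :
    Hmat *ᵥ (NormedSpace.exp (t • Amat g) *ᵥ Sum.elim ξω (Sum.elim ξv ξp))
      = fun i => ξv i + t * (crossProduct g ξω) i := by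
  rw [exp_Amat]
  funext i
  fin_cases i <;>
    simp [Matrix.mulVec, dotProduct, Fintype.sum_sum_type, Fin.sum_univ_three,
      Amat, Hmat, skew3, cross_apply, Matrix.mul_apply, Matrix.one_apply] <;>
    ring

/-- **Observability of roll, pitch, and velocity; unobservability of yaw and
position under body-velocity correction.** For `ξ = (ξ^ω, ξ^v, ξ^p) ∈ ℝ⁹`,
`H · exp (t A) · ξ = 0` for all `t` iff `ξ^v = 0` and `g × ξ^ω = 0`: the
unobservable directions are exactly attitude errors parallel to gravity (yaw)
together with arbitrary position errors. -/
theorem velocity_correction_observability (g : Fin 3 → ℝ)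
    (ξω ξv ξp : Fin 3 → ℝ) :
    (∀ t : ℝ, Hmat *ᵥ (NormedSpace.exp (t • Amat g) *ᵥ Sum.elim ξω (Sum.elim ξv ξp)) = 0)
      ↔ (ξv = 0 ∧ crossProduct g ξω = 0) := by
  simp only [Hval g ξω ξv ξp]
  constructor
  · intro h
    have h0 := h 0
    have h1 := h 1
    have hv : ξv = 0 := by
      funext i
      have := congrFun h0 i
      simpa using this
    refine ⟨hv, ?_⟩
    funext i
    have := congrFun h1 i
    rw [hv] at this
    simpa using this
  · rintro ⟨hv, hc⟩ t
    funext i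
    simp [hv, hc]
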